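/- arXiv:1409.5904 — 2 statements merged into one kernel-verified Lean document; each statement's English description precedes it below -/
import Mathlib

section
/- Let A be a graded polynomial algebra in finitely many variables over a field F, M a finitely generated graded A-module, and N ⊆ M a graded A-submodule. Then N is finitely generated, and for all sufficiently large l the degree-(l+1) component of N equals A_1 times its degree-l component. -/
/-!
`N` is finitely generated because `A` is Noetherian and `M` is finite. As `N` is the sum of its
graded pieces `N_l`, finitely many generators of `N` already lie in `N_0 + ⋯ + N_L` for some `L`.
Put `T_j = N_j` for `j ≤ L` and `T_j = A_1 · N_{j-1}` for `j > L`. Then `X_i · T_j ⊆ T_{j+1}`, so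
`⨆ T_j` is an `A`-submodule containing the generators, hence `N`; since `T_j ⊆ M_j` and the `M_j`
are independent, `N_j ⊆ T_j`, which for `j = l + 1 > L` reads `N_{l+1} ⊆ A_1 · N_l`.
-/

open MvPolynomial

theorem iSupIndep.iSup_inf_eq_of_le {ι α : Type*} [CompleteLattice α] [IsModularLattice α]
    {ℳ T : ι → α} (hℳ : iSupIndep ℳ) (hT : ∀ i, T i ≤ ℳ i) (j : ι) :
    (⨆ i, T i) ⊓ ℳ j = T j := by
  have hrest : (⨆ (i) (_ : i ≠ j), T i) ⊓ ℳ j = ⊥ :=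
    ((hℳ j).symm.mono_left (iSup₂_mono fun i _ => hT i)).eq_bot
  rw [iSup_split_single T j, sup_inf_assoc_of_le _ (hT j), hrest, sup_bot_eq]

theorem Submodule.FG.exists_le_span_partialSups {R S M : Type*} [Semiring R] [Semiring S]
    [AddCommMonoid M] [Module R M] [Module S M] [SMul R S] [IsScalarTower R S M]
    {N : Submodule S M} (hN : N.FG) {f : ℕ → Submodule R M}
    (hf : N.restrictScalars R ≤ ⨆ l, f l) :
    ∃ L, N ≤ Submodule.span S (partialSups f L : Set M) := by
  obtain ⟨G, rfl⟩ := hN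
  have hdeg : ∀ g ∈ G, ∃ l, g ∈ partialSups f l := fun g hg => by
    have hgf := hf (Submodule.subset_span hg)
    rwa [← iSup_partialSups_eq,
      Submodule.mem_iSup_of_directed _ (partialSups f).monotone.directed_le] at hgf
  choose! deg hdeg using hdeg
  refine ⟨G.sup deg, Submodule.span_le.mpr fun g hg => Submodule.subset_span ?_⟩
  exact (partialSups f).monotone (Finset.le_sup hg) (hdeg g hg)

theorem MvPolynomial.smul_mem_of_forall_X_smul_mem {σ R M : Type*} [CommSemiring R]
    [AddCommMonoid M] [Module R M] [Module (MvPolynomial σ R) M]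
    [IsScalarTower R (MvPolynomial σ R) M] {V : Submodule R M}
    (hV : ∀ i, ∀ v ∈ V, (X i : MvPolynomial σ R) • v ∈ V) (p : MvPolynomial σ R) {v : M}
    (hv : v ∈ V) : p • v ∈ V := by
  induction p using MvPolynomial.induction_on generalizing v with
  | C a => rw [← algebraMap_eq, algebraMap_smul]; exact V.smul_mem a hv
  | add p q hp hq => rw [add_smul]; exact V.add_mem (hp hv) (hq hv)
  | mul_X p i hp => rw [mul_comm, mul_smul]; exact hV i _ (hp hv)

namespace Submodule

variable {σ R M : Type*} [CommRing R] [AddCommGroup M] [Module R M]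
  [Module (MvPolynomial σ R) M] [IsScalarTower R (MvPolynomial σ R) M]
  (N : Submodule (MvPolynomial σ R) M) (ℳ : ℕ → Submodule R M)

noncomputable def homogeneousPart (l : ℕ) : Submodule R M := N.restrictScalars R ⊓ ℳ l

noncomputable def degreeOneSpan (l : ℕ) : Submodule R M :=
  span R {x | ∃ p ∈ homogeneousSubmodule σ R 1, ∃ m ∈ N.homogeneousPart ℳ l, x = p • m}

noncomputable def truncatedPart (L j : ℕ) : Submodule R M :=
  if j ≤ L then N.homogeneousPart ℳ j else N.degreeOneSpan ℳ (j - 1)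

variable {N ℳ}

theorem degreeOneSpan_le_homogeneousPart
    (hX : ∀ l, ∀ p ∈ homogeneousSubmodule σ R 1, ∀ m ∈ ℳ l, p • m ∈ ℳ (l + 1)) (l : ℕ) :
    N.degreeOneSpan ℳ l ≤ N.homogeneousPart ℳ (l + 1) := by
  refine span_le.mpr ?_
  rintro _ ⟨p, hp, m, hm, rfl⟩
  exact ⟨N.smul_mem p hm.1, hX l p hp m hm.2⟩

theorem truncatedPart_le_homogeneousPart
    (hX : ∀ l, ∀ p ∈ homogeneousSubmodule σ R 1, ∀ m ∈ ℳ l, p • m ∈ ℳ (l + 1)) (L j : ℕ) :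
    N.truncatedPart ℳ L j ≤ N.homogeneousPart ℳ j := by
  unfold truncatedPart
  split_ifs with hj
  · exact le_rfl
  · simpa [Nat.sub_add_cancel (by omega : 1 ≤ j)] using
      degreeOneSpan_le_homogeneousPart hX (j - 1)

theorem X_smul_mem_truncatedPart
    (hX : ∀ l, ∀ p ∈ homogeneousSubmodule σ R 1, ∀ m ∈ ℳ l, p • m ∈ ℳ (l + 1))
    {L j : ℕ} (i : σ) {m : M} (hm : m ∈ N.homogeneousPart ℳ j) :
    (X i : MvPolynomial σ R) • m ∈ N.truncatedPart ℳ L (j + 1) := by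
  have hXi : (X i : MvPolynomial σ R) ∈ homogeneousSubmodule σ R 1 := isHomogeneous_X R i
  unfold truncatedPart
  split_ifs
  · exact ⟨N.smul_mem _ hm.1, hX j _ hXi m hm.2⟩
  · exact subset_span ⟨X i, hXi, m, hm, rfl⟩

theorem X_smul_mem_iSup_truncatedPart
    (hX : ∀ l, ∀ p ∈ homogeneousSubmodule σ R 1, ∀ m ∈ ℳ l, p • m ∈ ℳ (l + 1))
    {L : ℕ} (i : σ) {v : M}
    (hv : v ∈ ⨆ j, N.truncatedPart ℳ L j) :
    (X i : MvPolynomial σ R) • v ∈ ⨆ j, N.truncatedPart ℳ L j := by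
  refine iSup_induction _ (motive := fun w => (X i : MvPolynomial σ R) • w ∈ _) hv ?_ ?_ ?_
  · exact fun j w hw => mem_iSup_of_mem (j + 1)
      (X_smul_mem_truncatedPart hX i (truncatedPart_le_homogeneousPart hX L j hw))
  · simp
  · intro w w' hw hw'
    rw [smul_add]
    exact add_mem hw hw'

theorem homogeneousPart_le_truncatedPart
    (hX : ∀ l, ∀ p ∈ homogeneousSubmodule σ R 1, ∀ m ∈ ℳ l, p • m ∈ ℳ (l + 1))
    (hℳ : iSupIndep ℳ) {L : ℕ}
    (hL : N ≤ span (MvPolynomial σ R) (partialSups (N.homogeneousPart ℳ) L : Set M)) (j : ℕ) :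
    N.homogeneousPart ℳ j ≤ N.truncatedPart ℳ L j := by
  have hspan : ∀ x ∈ span (MvPolynomial σ R) (partialSups (N.homogeneousPart ℳ) L : Set M),
      x ∈ ⨆ j, N.truncatedPart ℳ L j := by
    intro x hx
    induction hx using span_induction with
    | mem y hy =>
      refine partialSups_le _ L (⨆ j, N.truncatedPart ℳ L j) (fun k hk => ?_) hy
      exact (if_pos hk).symm.le.trans (le_iSup (N.truncatedPart ℳ L) k)
    | zero => exact zero_mem _
    | add y z _ _ hy hz => exact add_mem hy hz
    | smul p y _ hy =>
      exact smul_mem_of_forall_X_smul_mem (fun i _ => X_smul_mem_iSup_truncatedPart hX i) p hy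
  have hT : ∀ k, N.truncatedPart ℳ L k ≤ ℳ k := fun k =>
    (truncatedPart_le_homogeneousPart hX L k).trans inf_le_right
  rw [← hℳ.iSup_inf_eq_of_le hT j]
  exact inf_le_inf_right _ fun x hx => hspan x (hL hx)

theorem homogeneousPart_succ_eq_degreeOneSpan
    (hX : ∀ l, ∀ p ∈ homogeneousSubmodule σ R 1, ∀ m ∈ ℳ l, p • m ∈ ℳ (l + 1))
    (hℳ : iSupIndep ℳ) {L l : ℕ}
    (hL : N ≤ span (MvPolynomial σ R) (partialSups (N.homogeneousPart ℳ) L : Set M))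
    (hl : L ≤ l) :
    N.homogeneousPart ℳ (l + 1) = N.degreeOneSpan ℳ l := by
  refine le_antisymm ?_ (degreeOneSpan_le_homogeneousPart hX l)
  have hlL : ¬l + 1 ≤ L := by omega
  simpa [truncatedPart, hlL] using homogeneousPart_le_truncatedPart hX hℳ hL (l + 1)

end Submodule

/-- Over a field `F`, let `M = ⊕ M_l` be a finitely generated graded
module over `A = F[X_1,…,X_n]` and `N ⊆ M` a graded `A`-submodule (i.e. `N` is the
supremum of its homogeneous pieces `N_l = N ∩ M_l`). Then `N` is finitely generated
and for all sufficiently large `l` one has `N_{l+1} = A_1 · N_l`. -/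
theorem graded_submodule_fg_and_top_degree_generation
    {F : Type*} [Field F] {n : ℕ} {M : Type*} [AddCommGroup M]
    [Module F M] [Module (MvPolynomial (Fin n) F) M]
    [IsScalarTower F (MvPolynomial (Fin n) F) M]
    (ℳ : ℕ → Submodule F M)
    (hdecomp : DirectSum.IsInternal ℳ)
    (hsmul : ∀ (i l : ℕ), ∀ p ∈ MvPolynomial.homogeneousSubmodule (Fin n) F i,
      ∀ m ∈ ℳ l, p • m ∈ ℳ (i + l))
    (hfg : Module.Finite (MvPolynomial (Fin n) F) M)
    (N : Submodule (MvPolynomial (Fin n) F) M)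
    (hgraded : N.restrictScalars F = ⨆ l : ℕ, (N.restrictScalars F ⊓ ℳ l)) :
    N.FG ∧
    ∃ L : ℕ, ∀ l ≥ L,
      N.restrictScalars F ⊓ ℳ (l + 1) = Submodule.span F
        {x : M | ∃ p ∈ MvPolynomial.homogeneousSubmodule (Fin n) F 1,
          ∃ m ∈ N.restrictScalars F ⊓ ℳ l, x = p • m} := by
  have hX : ∀ l, ∀ p ∈ homogeneousSubmodule (Fin n) F 1, ∀ m ∈ ℳ l, p • m ∈ ℳ (l + 1) :=
    fun l p hp m hm => add_comm 1 l ▸ hsmul 1 l p hp m hm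
  have hNfg : N.FG := IsNoetherian.noetherian N
  obtain ⟨L, hL⟩ := hNfg.exists_le_span_partialSups hgraded.le
  exact ⟨hNfg, L, fun l hl =>
    Submodule.homogeneousPart_succ_eq_degreeOneSpan hX hdecomp.submodule_iSupIndep hL hl⟩
end

section
/- Let V be a vector space over a field, T : V → V linear, W ⊆ V finite-dimensional, and let U be the stable term of the chain W ⊇ Ker_T W ⊇ Ker_T² W ⊇ .... Then a vector w ∈ W lies in U if and only if span{T^j w : j ≥ 0} ⊆ W, this span has finite dimension bounded by dim W, and T(span{T^j w}) ⊆ span{T^j w}. -/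
private lemma iterate_mem_iff
    {K V : Type*} [Field K] [AddCommGroup V] [Module K V]
    (T : V →ₗ[K] V) (W : Submodule K V) :
    ∀ (k : ℕ) (w : V),
      w ∈ (fun U : Submodule K V => U ⊓ Submodule.comap T U)^[k] W ↔
        ∀ j : ℕ, j ≤ k → (T ^ j) w ∈ W := by
  intro k
  induction k with
  | zero =>
    intro w
    simp [Nat.le_zero]
  | succ k ih =>
    intro w
    rw [Function.iterate_succ_apply']
    simp only [Submodule.mem_inf, Submodule.mem_comap, ih]
    constructor
    · rintro ⟨h1, h2⟩ j hj
      rcases Nat.eq_or_lt_of_le hj with h | h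
      · subst h
        have := h2 k le_rfl
        rwa [← Module.End.mul_apply, ← pow_succ] at this
      · exact h1 j (Nat.lt_succ_iff.mp h)
    · intro h
      refine ⟨fun j hj => h j (hj.trans k.le_succ), fun j hj => ?_⟩
      have := h (j + 1) (Nat.succ_le_succ hj)
      rwa [pow_succ, Module.End.mul_apply] at this

/-- Characterization of the stable term `U = ⋂_k Ker_T^k W` of the
chain `W ⊇ Ker_T W ⊇ Ker_T² W ⊇ ⋯`: a vector `w` lies in `U` iff its whole
`T`-orbit `{T^j w : j ≥ 0}` stays in `W`, equivalently iff the span of the orbit is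
a `T`-invariant subspace contained in `W`. -/
theorem kernel_chain_stable_term_characterization
    {K V : Type*} [Field K] [AddCommGroup V] [Module K V]
    (T : V →ₗ[K] V) (W : Submodule K V) [FiniteDimensional K W] :
    ∀ w : V,
      (w ∈ ⨅ k : ℕ, (fun U : Submodule K V => U ⊓ Submodule.comap T U)^[k] W ↔
        ∀ j : ℕ, (T ^ j) w ∈ W) ∧
      (w ∈ ⨅ k : ℕ, (fun U : Submodule K V => U ⊓ Submodule.comap T U)^[k] W ↔
        (Submodule.span K (Set.range fun j : ℕ => (T ^ j) w) ≤ W ∧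
          Submodule.map T (Submodule.span K (Set.range fun j : ℕ => (T ^ j) w)) ≤
            Submodule.span K (Set.range fun j : ℕ => (T ^ j) w))) := by
  intro w
  have hmain : (w ∈ ⨅ k : ℕ, (fun U : Submodule K V => U ⊓ Submodule.comap T U)^[k] W ↔
      ∀ j : ℕ, (T ^ j) w ∈ W) := by
    simp only [Submodule.mem_iInf, iterate_mem_iff]
    constructor
    · intro h j
      exact (h j) j le_rfl
    · intro h k j _
      exact h j
  refine ⟨hmain, hmain.trans ?_⟩
  constructor
  · intro h
    refine ⟨Submodule.span_le.mpr ?_, ?_⟩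
    · rintro x ⟨j, rfl⟩
      exact h j
    · rw [Submodule.map_span]
      refine Submodule.span_le.mpr ?_
      rintro x ⟨y, ⟨j, rfl⟩, rfl⟩
      refine Submodule.subset_span ⟨j + 1, ?_⟩
      simp [pow_succ', Module.End.mul_apply]
  · rintro ⟨h1, _⟩ j
    exact h1 (Submodule.subset_span ⟨j, rfl⟩)
end
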